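/- arXiv:2006.02259 — 2 statements merged into one kernel-verified Lean document; each statement's English description precedes it below -/
import Mathlib

section
/- Let p be a prime with p < n < 2p and p ∤ n, and let r ≥ 1. Every partition μ of n in the dominance-upward closure of the hooks {(a,1^b) : a+b = n, 1 ≤ b ≤ r} p-dominates some hook (a, 1^b) with 1 ≤ b ≤ r. -/
/-- `f` is a partition of `n`: weakly decreasing, at most `n` parts, parts summing to `n`. -/
def IsPartition (n : ℕ) (f : ℕ → ℕ) : Prop :=
  Antitone f ∧ (∀ i, n ≤ i → f i = 0) ∧ ∑ i ∈ Finset.range n, f i = n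

/-- `Dominates μ l` : `l ⊴ μ` in the dominance order (partial sums of `l` bounded by those of `μ`). -/
def Dominates (μ l : ℕ → ℕ) : Prop :=
  ∀ a : ℕ, ∑ i ∈ Finset.range a, l i ≤ ∑ i ∈ Finset.range a, μ i

/-- `f` is `p`-restricted: consecutive differences are `< p`. -/
def IsRestricted (p : ℕ) (f : ℕ → ℕ) : Prop := ∀ i, f i - f (i + 1) < p

/-- A weak `p`-expansion `f = ∑_{i} p^i ⬝ c i` of a tuple `f` (a partition of `n` has all
base-`p` digits vanishing from index `n` on, so we cut the sum off at `n`). -/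
def IsWeakExpansion (p n : ℕ) (f : ℕ → ℕ) (c : ℕ → ℕ → ℕ) : Prop :=
  (∀ i, n ≤ i → c i = 0) ∧ ∀ j, f j = ∑ i ∈ Finset.range n, p ^ i * c i j

/-- The base `p` expansion of `f`: a weak `p`-expansion all of whose digits are
`p`-restricted partitions. -/
def IsBasePExpansion (p n : ℕ) (f : ℕ → ℕ) (c : ℕ → ℕ → ℕ) : Prop :=
  IsWeakExpansion p n f c ∧
    ∀ i, Antitone (c i) ∧ IsRestricted p (c i) ∧ ∀ j, n ≤ j → c i j = 0

/-- `g` is the sorted (weakly decreasing) rearrangement of the tuple `γ`. -/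
def IsSortedOf (γ g : ℕ → ℕ) : Prop :=
  Antitone g ∧ ∃ σ : Equiv.Perm ℕ, ∀ j, g j = γ (σ j)

/-- `μ` `p`-dominates `τ`: there is a weak `p`-expansion `τ = ∑ p^i ⬝ γ i` such that the
sorted rearrangement of each `γ i` is dominated by the `i`-th digit of the base `p`
expansion of `μ`. -/
def PDominates (p n : ℕ) (μ τ : ℕ → ℕ) : Prop :=
  ∃ m c, IsBasePExpansion p n μ m ∧ IsWeakExpansion p n τ c ∧
    ∀ i, ∃ g, IsSortedOf (c i) g ∧ Dominates (m i) g

/-- The hook partition `(a, 1^b)`. -/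
def hookFn (a b : ℕ) : ℕ → ℕ := fun j => if j = 0 then a else if j ≤ b then 1 else 0

/-- The one-part partition `(n)`. -/
def onePartFn (n : ℕ) : ℕ → ℕ := fun j => if j = 0 then n else 0

/-- The two-part partition `(a, b)`. -/
def twoPartFn (a b : ℕ) : ℕ → ℕ := fun j => if j = 0 then a else if j = 1 then b else 0

/-!
Since `μ 0 + μ 1 ≤ n < 2p`, every row of `μ` but the first is shorter than `p`, so `μ` fails to
be `p`-restricted only when `μ 0 - μ 1 ≥ p`, and then by less than `2p`.

If `μ` is `p`-restricted it is its own base `p` expansion, and the hook it dominates already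
works; the degenerate hook `(0, 1^n)` is replaced by `(1, 1^(n-1)) = (1^n)`, which every partition
dominates.

Otherwise the base `p` expansion of `μ` is `ν + p ⬝ (1)` with `ν = (μ 0 - p, μ 1, μ 2, …)`.
A hook `(a, 1^b)` with `b < n - p` splits as `(a - p, 1^b) + p ⬝ (1)`, and subtracting `p` from the
first part of both `μ` and the hook preserves dominance. If `b ≥ n - p`, the hook
`(p, 1^(n-p)) = (0, 1^(n-p)) + p ⬝ (1)` works instead: its first digit sorts to `(1^(n-p))`, which
is dominated by the partition `ν` of `n - p`.
-/

open Finset Function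

lemma sum_range_eq_of_eq_zero {f : ℕ → ℕ} {N M : ℕ} (hf : ∀ i, N ≤ i → f i = 0) (h : N ≤ M) :
    ∑ i ∈ range M, f i = ∑ i ∈ range N, f i :=
  (sum_subset (range_subset_range.2 h) fun i _ hi => hf i (by simpa using hi)).symm

lemma min_sum_range_le_sum_range {ν : ℕ → ℕ} {N : ℕ} (hν : Antitone ν)
    (hN : ∀ i, N ≤ i → ν i = 0) (k : ℕ) :
    min k (∑ i ∈ range N, ν i) ≤ ∑ i ∈ range k, ν i := by
  by_cases hpos : ∀ i < k, 1 ≤ ν i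
  · refine (min_le_left _ _).trans ?_
    simpa using card_nsmul_le_sum (range k) ν 1 fun i hi => hpos i (mem_range.1 hi)
  · push Not at hpos
    obtain ⟨i, hik, hi⟩ := hpos
    have hk : ∀ j, k ≤ j → ν j = 0 := fun j hj => by have := hν (hik.le.trans hj); omega
    refine (min_le_right _ _).trans_eq ?_
    rw [← sum_range_eq_of_eq_zero hN (le_max_left N k),
      sum_range_eq_of_eq_zero hk (le_max_right N k)]

lemma sum_range_update_zero_sub_add {f : ℕ → ℕ} {p k : ℕ} (h : p ≤ f 0) (hk : 0 < k) :
    ∑ i ∈ range k, update f 0 (f 0 - p) i + p = ∑ i ∈ range k, f i := by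
  obtain ⟨k, rfl⟩ : ∃ k', k = k' + 1 := ⟨k - 1, by omega⟩
  simp only [sum_range_succ', update_self, ne_eq, Nat.succ_ne_zero, not_false_eq_true,
    update_of_ne]
  omega

lemma Dominates.update_zero_sub {μ l : ℕ → ℕ} {p : ℕ} (hdom : Dominates μ l) (hl : p ≤ l 0) :
    Dominates (update μ 0 (μ 0 - p)) (update l 0 (l 0 - p)) := by
  have hμ : p ≤ μ 0 := hl.trans (by simpa using hdom 1)
  intro k
  rcases k.eq_zero_or_pos with rfl | hk
  · simp
  · have := sum_range_update_zero_sub_add hl hk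
    have := sum_range_update_zero_sub_add hμ hk
    have := hdom k
    omega

lemma Antitone.update_zero {f : ℕ → ℕ} (hf : Antitone f) {x : ℕ} (hx : f 1 ≤ x) :
    Antitone (update f 0 x) := by
  refine antitone_nat_of_succ_le fun j => ?_
  rcases j with _ | j
  · simpa using hx
  · simpa using hf (j + 1).le_succ

lemma Antitone.isSortedOf {f : ℕ → ℕ} (hf : Antitone f) : IsSortedOf f f :=
  ⟨hf, Equiv.refl ℕ, fun _ => rfl⟩

lemma Antitone.isRestricted {p : ℕ} {f : ℕ → ℕ} (hf : Antitone f) (h0 : f 0 - f 1 < p)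
    (h1 : f 1 < p) : IsRestricted p f
  | 0 => h0
  | i + 1 => by have := hf (Nat.le_add_left 1 i); omega

lemma sum_range_succ_hookFn (a b k : ℕ) :
    ∑ j ∈ range (k + 1), hookFn a b j = a + min k b := by
  induction k with
  | zero => simp [hookFn]
  | succ k ih =>
    rw [sum_range_succ, ih]
    simp only [hookFn, Nat.add_one_ne_zero, if_false]
    split <;> omega

@[simp]
lemma hookFn_zero (a b : ℕ) : hookFn a b 0 = a := rfl

lemma update_hookFn_zero (a b c : ℕ) : update (hookFn a b) 0 c = hookFn c b := by
  ext j
  rcases j with _ | j <;> simp [hookFn]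

lemma antitone_hookFn {a : ℕ} (ha : 1 ≤ a) (b : ℕ) : Antitone (hookFn a b) := by
  refine antitone_nat_of_succ_le fun j => ?_
  simp only [hookFn, Nat.add_one_ne_zero, if_false]
  split_ifs <;> omega

lemma isSortedOf_hookFn_zero (m : ℕ) : IsSortedOf (hookFn 0 (m + 1)) (hookFn 1 m) :=
  ⟨antitone_hookFn le_rfl m, Equiv.swap 0 (m + 1), fun j => by
    simp only [hookFn, Equiv.swap_apply_def]
    split_ifs <;> omega⟩

lemma dominates_hookFn_one {ν : ℕ → ℕ} {N m : ℕ} (hν : Antitone ν) (hN : ∀ i, N ≤ i → ν i = 0)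
    (hm : m + 1 ≤ ∑ i ∈ range N, ν i) : Dominates ν (hookFn 1 m)
  | 0 => by simp
  | k + 1 => by
    rw [sum_range_succ_hookFn]
    have := min_sum_range_le_sum_range hν hN (k + 1)
    omega

section Digits

variable {p n : ℕ}

def IsPDigit (p n : ℕ) (f : ℕ → ℕ) : Prop :=
  Antitone f ∧ IsRestricted p f ∧ ∀ j, n ≤ j → f j = 0

lemma isPDigit_zero (hp : 0 < p) : IsPDigit p n 0 :=
  ⟨fun _ _ _ => le_rfl, fun _ => hp, fun _ _ => rfl⟩

lemma isPDigit_onePartFn_one (hp : 1 < p) (hn : 0 < n) : IsPDigit p n (onePartFn 1) := by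
  have hanti : Antitone (onePartFn 1) := antitone_nat_of_succ_le fun j => by
    simp only [onePartFn, Nat.add_one_ne_zero, if_false]
    split <;> omega
  exact ⟨hanti, hanti.isRestricted (by simpa [onePartFn]) (by simp [onePartFn]; omega),
    fun j hj => by simp [onePartFn]; omega⟩

lemma IsPartition.isPDigit {μ : ℕ → ℕ} (hμ : IsPartition n μ) (hμ01 : μ 0 + μ 1 < 2 * p)
    (hres : μ 0 - μ 1 < p) : IsPDigit p n μ :=
  ⟨hμ.1, hμ.1.isRestricted hres (by have := hμ.1 zero_le_one; omega), hμ.2.1⟩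

lemma IsPartition.isPDigit_update_zero_sub {μ : ℕ → ℕ} (hμ : IsPartition n μ)
    (hμ01 : μ 0 + μ 1 < 2 * p) (hres : p ≤ μ 0 - μ 1) : IsPDigit p n (update μ 0 (μ 0 - p)) := by
  have hanti := hμ.1.update_zero (x := μ 0 - p) (by omega)
  refine ⟨hanti, hanti.isRestricted (by simp; omega) (by have := hμ.1 zero_le_one; simp; omega),
    fun j hj => ?_⟩
  rcases j with _ | j
  · simp [hμ.2.1 0 hj]
  · simpa using hμ.2.1 _ hj

def twoDigits (c d : ℕ → ℕ) : ℕ → ℕ → ℕ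
  | 0 => c
  | 1 => d
  | _ + 2 => 0

lemma isWeakExpansion_twoDigits (hn : 2 ≤ n) {f c d : ℕ → ℕ} (h : ∀ j, f j = c j + p * d j) :
    IsWeakExpansion p n f (twoDigits c d) := by
  have hvan : ∀ i, 2 ≤ i → twoDigits c d i = 0 := fun i hi => by
    obtain ⟨i, rfl⟩ : ∃ i', i = i' + 2 := ⟨i - 2, by omega⟩
    rfl
  refine ⟨fun i hi => hvan i (by omega), fun j => ?_⟩
  rw [sum_range_eq_of_eq_zero (N := 2) (fun i hi => by simp [hvan i hi]) hn]
  simp [sum_range_succ, twoDigits, h]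

lemma isBasePExpansion_twoDigits (hp : 0 < p) (hn : 2 ≤ n) {f c d : ℕ → ℕ}
    (h : ∀ j, f j = c j + p * d j) (hc : IsPDigit p n c) (hd : IsPDigit p n d) :
    IsBasePExpansion p n f (twoDigits c d) :=
  ⟨isWeakExpansion_twoDigits hn h, fun
    | 0 => hc
    | 1 => hd
    | _ + 2 => isPDigit_zero hp⟩

lemma pDominates_twoDigits {μ τ c d c' d' g g' : ℕ → ℕ}
    (hμ : IsBasePExpansion p n μ (twoDigits c d)) (hτ : IsWeakExpansion p n τ (twoDigits c' d'))
    (hg : IsSortedOf c' g) (hcg : Dominates c g) (hg' : IsSortedOf d' g') (hdg' : Dominates d g') :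
    PDominates p n μ τ :=
  ⟨_, _, hμ, hτ, fun
    | 0 => ⟨g, hg, hcg⟩
    | 1 => ⟨g', hg', hdg'⟩
    | _ + 2 => ⟨0, antitone_const.isSortedOf, fun _ => by simp⟩⟩

lemma pDominates_of_isPDigit (hp : 0 < p) (hn : 2 ≤ n) {μ τ : ℕ → ℕ} (hμ : IsPDigit p n μ)
    (hτ : Antitone τ) (hdom : Dominates μ τ) : PDominates p n μ τ :=
  pDominates_twoDigits (isBasePExpansion_twoDigits hp hn (by simp) hμ (isPDigit_zero hp))
    (isWeakExpansion_twoDigits hn (by simp)) hτ.isSortedOf hdom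
    antitone_const.isSortedOf fun _ => le_rfl

lemma pDominates_of_isPDigit_update_zero (hp : 1 < p) (hn : 2 ≤ n) {μ τ g : ℕ → ℕ}
    (hpμ : p ≤ μ 0) (hν : IsPDigit p n (update μ 0 (μ 0 - p))) (hpτ : p ≤ τ 0)
    (hg : IsSortedOf (update τ 0 (τ 0 - p)) g) (hdom : Dominates (update μ 0 (μ 0 - p)) g) :
    PDominates p n μ τ := by
  have hsplit {f : ℕ → ℕ} (hf : p ≤ f 0) (j : ℕ) :
      f j = update f 0 (f 0 - p) j + p * onePartFn 1 j := by
    rcases j with _ | j <;> simp [onePartFn]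
    omega
  have hone := isPDigit_onePartFn_one (n := n) hp (by omega)
  exact pDominates_twoDigits
    (isBasePExpansion_twoDigits (by omega) hn (hsplit hpμ) hν hone)
    (isWeakExpansion_twoDigits hn (hsplit hpτ)) hg hdom hone.1.isSortedOf fun _ => le_rfl

end Digits

theorem pDominates_hook_of_dominates_middle_general (p n r : ℕ)
    (h1 : p < n) (h2 : n < 2 * p)
    (μ : ℕ → ℕ) (hμ : IsPartition n μ)
    (h : ∃ a b, a + b = n ∧ 1 ≤ b ∧ b ≤ r ∧ Dominates μ (hookFn a b)) :
    ∃ a b, a + b = n ∧ 1 ≤ b ∧ b ≤ r ∧ PDominates p n μ (hookFn a b) := by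
  obtain ⟨a, b, hab, hb1, hbr, hdom⟩ := h
  have hsum := hμ.2.2
  have hμ01 : μ 0 + μ 1 ≤ n := by
    simpa [hsum, sum_range_succ] using sum_le_sum_of_subset (f := μ)
      (range_subset_range.2 (by omega : 2 ≤ n))
  by_cases hres : μ 0 - μ 1 < p
  · have hμp : IsPDigit p n μ := hμ.isPDigit (by omega) hres
    rcases a.eq_zero_or_pos with rfl | ha
    · exact ⟨1, n - 1, by omega, by omega, by omega, pDominates_of_isPDigit (by omega) (by omega)
        hμp (antitone_hookFn le_rfl _) (dominates_hookFn_one hμ.1 hμ.2.1 (by omega))⟩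
    · exact ⟨a, b, hab, hb1, hbr, pDominates_of_isPDigit (by omega) (by omega) hμp
        (antitone_hookFn ha _) hdom⟩
  have hν : IsPDigit p n (update μ 0 (μ 0 - p)) :=
    hμ.isPDigit_update_zero_sub (by omega) (by omega)
  have hνsum : ∑ i ∈ range n, update μ 0 (μ 0 - p) i + p = n :=
    (sum_range_update_zero_sub_add (by omega) (by omega)).trans hsum
  by_cases hb : b < n - p
  · refine ⟨a, b, hab, hb1, hbr, pDominates_of_isPDigit_update_zero (by omega) (by omega)
      (by omega) hν (by simp; omega) ?_ (hdom.update_zero_sub (by simp; omega))⟩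
    rw [hookFn_zero, update_hookFn_zero]
    exact (antitone_hookFn (by omega) b).isSortedOf
  · obtain ⟨m, hm⟩ : ∃ m, n - p = m + 1 := ⟨n - p - 1, by omega⟩
    refine ⟨p, n - p, by omega, by omega, by omega, pDominates_of_isPDigit_update_zero (by omega)
      (by omega) (by omega) hν (by simp) ?_ (dominates_hookFn_one (m := m) hν.1 hν.2.2 (by omega))⟩
    rw [hookFn_zero, update_hookFn_zero, Nat.sub_self, hm]
    exact isSortedOf_hookFn_zero m

/-- for `p < n < 2p`, `p ∤ n`, every partition of `n` in the
dominance-upward closure of the hooks `(a,1^b)` with `1 ≤ b ≤ r` `p`-dominates one of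
those hooks. -/
theorem pDominates_hook_of_dominates_middle (p n r : ℕ) (hp : p.Prime)
    (h1 : p < n) (h2 : n < 2 * p) (hpn : ¬ p ∣ n) (hr : 1 ≤ r)
    (μ : ℕ → ℕ) (hμ : IsPartition n μ)
    (h : ∃ a b, a + b = n ∧ 1 ≤ b ∧ b ≤ r ∧ Dominates μ (hookFn a b)) :
    ∃ a b, a + b = n ∧ 1 ≤ b ∧ b ≤ r ∧ PDominates p n μ (hookFn a b) :=
  pDominates_hook_of_dominates_middle_general p n r h1 h2 μ hμ h
end

section
/- Let p be a prime with n > 2p and r ≥ p. Then μ = (n-p, p) dominates the hook (n-p, 1^p), but μ does not p-dominate any hook (a, 1^b) with 1 ≤ b ≤ r. Hence the dominance-upward closure of the hooks {(a,1^b) : 1 ≤ b ≤ r} is strictly larger than the set of partitions p-dominating some such hook. -/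
/-!
Since the `0`-th base `p` digit of `(x, y)` is `p`-restricted, a two-row partition `(x, y)`
with `y ≥ p` has a digit `m i`, `i ≥ 1`, with two nonzero parts. In a weak `p`-expansion `c`
of a tuple `τ` with at most one entry `≥ p` (a hook), every digit `c i` with `i ≥ 1` has at
most one nonzero entry. Domination of the sorted digits bounds the row sums of `c` by those of
`m`, and entrywise by the first part of `m i`. As `τ` and `(x, y)` have the same size, the
row-sum bounds are equalities, which is impossible for `c i` against `m i`.
-/

open Finset

theorem sum_range_hookFn (a b N : ℕ) :
    ∑ j ∈ range N, hookFn a b j = if N = 0 then 0 else a + min (N - 1) b := by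
  induction N with
  | zero => simp
  | succ k ih =>
    rw [sum_range_succ, ih]
    rcases Nat.eq_zero_or_pos k with rfl | hk
    · simp [hookFn]
    · rw [if_neg hk.ne', if_neg k.succ_ne_zero]
      simp only [hookFn]
      split_ifs <;> omega

theorem sum_range_twoPartFn (a b N : ℕ) :
    ∑ j ∈ range N, twoPartFn a b j = if N = 0 then 0 else if N = 1 then a else a + b := by
  induction N with
  | zero => simp
  | succ k ih =>
    rw [sum_range_succ, ih]
    rcases Nat.eq_zero_or_pos k with rfl | hk
    · simp [twoPartFn]
    · rw [if_neg hk.ne', if_neg k.succ_ne_zero]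
      simp only [twoPartFn]
      split_ifs <;> omega

theorem dominates_twoPartFn_hookFn (a b : ℕ) : Dominates (twoPartFn a b) (hookFn a b) := by
  intro N
  rw [sum_range_hookFn, sum_range_twoPartFn]
  split_ifs <;> omega

namespace IsWeakExpansion

variable {p n : ℕ} {f : ℕ → ℕ} {c : ℕ → ℕ → ℕ}

theorem pow_mul_le (h : IsWeakExpansion p n f c) (i j : ℕ) : p ^ i * c i j ≤ f j := by
  rcases lt_or_ge i n with hi | hi
  · rw [h.2 j]
    exact single_le_sum (f := fun k => p ^ k * c k j) (fun _ _ => Nat.zero_le _)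
      (mem_range.2 hi)
  · simp [h.1 i hi]

theorem digit_eq_zero (h : IsWeakExpansion p n f c) (hp : p ≠ 0) {j : ℕ} (hj : f j = 0)
    (i : ℕ) : c i j = 0 := by
  have := h.pow_mul_le i j
  rw [hj, Nat.le_zero, mul_eq_zero] at this
  exact this.resolve_left (pow_ne_zero i hp)

theorem digit_eq_zero_of_lt (h : IsWeakExpansion p n f c) {i j : ℕ} (hi : i ≠ 0)
    (hj : f j < p) : c i j = 0 := by
  by_contra hc
  have hp : p ≤ p ^ i := Nat.le_self_pow hi p
  have := h.pow_mul_le i j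
  have : p ^ i ≤ p ^ i * c i j := Nat.le_mul_of_pos_right _ (Nat.pos_of_ne_zero hc)
  omega

theorem exists_digit_ne_zero (h : IsWeakExpansion p n f c) {j : ℕ} (hj : c 0 j < f j) :
    ∃ i, i ≠ 0 ∧ c i j ≠ 0 := by
  by_contra! hc
  have : f j = c 0 j := by
    rw [h.2 j, sum_eq_single 0 (fun i _ hi => by rw [hc i hi, mul_zero])]
    · simp
    · intro h0
      rw [h.1 0 (by simpa using h0)]
      simp
  omega

theorem sum_range_eq (h : IsWeakExpansion p n f c) (N : ℕ) :
    ∑ j ∈ range N, f j = ∑ i ∈ range n, p ^ i * ∑ j ∈ range N, c i j := by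
  simp_rw [h.2, mul_sum]
  exact sum_comm

theorem sum_range_digit_eq {μ τ : ℕ → ℕ} {m : ℕ → ℕ → ℕ} {N K : ℕ} (hp : p ≠ 0)
    (hm : IsWeakExpansion p n μ m) (hc : IsWeakExpansion p n τ c)
    (hrow : ∀ i, ∑ j ∈ range N, c i j ≤ ∑ j ∈ range K, m i j)
    (hsum : ∑ j ∈ range N, τ j = ∑ j ∈ range K, μ j) {i : ℕ} (hi : i < n) :
    ∑ j ∈ range N, c i j = ∑ j ∈ range K, m i j := by
  rw [hc.sum_range_eq, hm.sum_range_eq] at hsum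
  have := (sum_eq_sum_iff_of_le fun k _ => Nat.mul_le_mul_left _ (hrow k)).1 hsum i
    (mem_range.2 hi)
  exact Nat.eq_of_mul_eq_mul_left (pow_pos (Nat.pos_of_ne_zero hp) i) this

end IsWeakExpansion

namespace IsSortedOf

variable {γ g μ : ℕ → ℕ}

theorem le_of_dominates (hg : IsSortedOf γ g) (hd : Dominates μ g) (j : ℕ) : γ j ≤ μ 0 := by
  obtain ⟨hanti, σ, hσ⟩ := hg
  have hg0 : g 0 ≤ μ 0 := by simpa using hd 1
  calc γ j = g (σ.symm j) := by rw [hσ, Equiv.apply_symm_apply]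
    _ ≤ g 0 := hanti (Nat.zero_le _)
    _ ≤ μ 0 := hg0

theorem sum_le_of_dominates (hg : IsSortedOf γ g) (hd : Dominates μ g) {K : ℕ}
    (hμ : ∀ j, K ≤ j → μ j = 0) (s : Finset ℕ) : ∑ j ∈ s, γ j ≤ ∑ j ∈ range K, μ j := by
  obtain ⟨-, σ, hσ⟩ := hg
  obtain ⟨M, hM⟩ := exists_nat_subset_range (s.image σ.symm)
  calc ∑ j ∈ s, γ j = ∑ j ∈ s.image σ.symm, g j := by
        rw [sum_image fun _ _ _ _ h => σ.symm.injective h]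
        simp [hσ]
    _ ≤ ∑ j ∈ range (M + K), g j :=
        sum_le_sum_of_subset (hM.trans (range_subset_range.2 (by omega)))
    _ ≤ ∑ j ∈ range (M + K), μ j := hd _
    _ = ∑ j ∈ range K, μ j :=
        (sum_subset (range_subset_range.2 (by omega))
          fun j _ hj => hμ j (by simpa using hj)).symm

end IsSortedOf

theorem not_pDominates_twoPartFn {p n x y N : ℕ} {τ : ℕ → ℕ} (hy : p ≤ y)
    (hτ : ∀ j, j ≠ 0 → τ j < p) (hsum : ∑ j ∈ range N, τ j = x + y) :
    ¬ PDominates p n (twoPartFn x y) τ := by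
  rintro ⟨m, c, ⟨hm, hm_digit⟩, hc, hdom⟩
  have hp : p ≠ 0 := (Nat.zero_le _ |>.trans_lt (hτ 1 one_ne_zero)).ne'
  have hm_two : ∀ i j, 2 ≤ j → m i j = 0 := fun i j hj =>
    hm.digit_eq_zero hp (by simp only [twoPartFn]; split_ifs <;> omega) i
  have hm01 : m 0 1 < twoPartFn x y 1 := by
    have := (hm_digit 0).2.1 1
    rw [hm_two 0 2 le_rfl] at this
    show m 0 1 < y
    omega
  obtain ⟨i, hi0, hi1⟩ := hm.exists_digit_ne_zero hm01
  have hin : i < n := by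
    by_contra! h
    exact hi1 (by rw [hm.1 i h]; rfl)
  have hrow : ∀ k, ∑ j ∈ range N, c k j ≤ ∑ j ∈ range 2, m k j := fun k =>
    let ⟨_, hg, hd⟩ := hdom k
    hg.sum_le_of_dominates hd (hm_two k) _
  have hrow_eq := IsWeakExpansion.sum_range_digit_eq hp hm hc hrow
    (by rw [hsum, sum_range_twoPartFn]; rfl) hin
  have hci : ∑ j ∈ range N, c i j ≤ c i 0 :=
    calc ∑ j ∈ range N, c i j ≤ ∑ j ∈ range (N + 1), c i j :=
          sum_le_sum_of_subset (range_subset_range.2 N.le_succ)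
      _ = c i 0 :=
          sum_eq_single_of_mem 0 (by simp) fun j _ hj => hc.digit_eq_zero_of_lt hi0 (hτ j hj)
  have hci0 : c i 0 ≤ m i 0 :=
    let ⟨_, hg, hd⟩ := hdom i
    hg.le_of_dominates hd 0
  simp only [sum_range_succ, sum_range_zero, zero_add] at hrow_eq
  omega

theorem two_row_not_pDominates_general (p n r : ℕ) (hp : p.Prime) (hn : 2 * p < n) :
    Dominates (twoPartFn (n - p) p) (hookFn (n - p) p) ∧
      ∀ a b, a + b = n → 1 ≤ b → b ≤ r →
        ¬ PDominates p n (twoPartFn (n - p) p) (hookFn a b) := by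
  refine ⟨dominates_twoPartFn_hookFn _ _, fun a b hab _ _ => ?_⟩
  have hhook : ∀ j, j ≠ 0 → hookFn a b j < p := fun j hj => by
    have := hp.two_le
    simp only [hookFn, if_neg hj]
    split_ifs <;> omega
  refine not_pDominates_twoPartFn le_rfl hhook (N := b + 1) ?_
  rw [sum_range_hookFn]
  simp only [Nat.add_one_ne_zero, if_false, Nat.add_sub_cancel, min_self]
  omega

/-- for `n > 2p` and `r ≥ p`, the partition `(n-p, p)` dominates the hook
`(n-p, 1^p)` but does not `p`-dominate any hook `(a,1^b)` with `1 ≤ b ≤ r`. -/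
theorem two_row_not_pDominates (p n r : ℕ) (hp : p.Prime) (hn : 2 * p < n) (hr : p ≤ r) :
    Dominates (twoPartFn (n - p) p) (hookFn (n - p) p) ∧
      ∀ a b, a + b = n → 1 ≤ b → b ≤ r →
        ¬ PDominates p n (twoPartFn (n - p) p) (hookFn a b) :=
  two_row_not_pDominates_general p n r hp hn
end
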